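/- arXiv:2305.13075 — 9 statements merged into one kernel-verified Lean document; each statement's English description precedes it below -/
import Mathlib

section
/- For all natural numbers n ≥ 1 and real p with 1/2 ≤ p ≤ 1: (1/2^n) · Σ_{i=0}^{n} C(n,i) · (max(i, n−i)·p + min(i, n−i)·(1−p)) / n = 1/2 + (1/2^n)·(2p−1)·C(n−1, ⌊(n−1)/2⌋). -/
/-!
Writing `a = i`, `b = n - i`, one has `max a b * p + min a b * (1 - p) = n / 2 + (p - 1/2) |n - 2i|`,
so the claim reduces to the mean absolute deviation of the binomial coefficients,
`∑ᵢ C(n, i) |n - 2i| = 2n C(n-1, ⌊(n-1)/2⌋)`. This follows from the telescoping identity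
`C(n, i) (n - 2i) = n (C(n-1, i) - C(n-1, i-1))`: the partial sums of `C(n, i) (n - 2i)` are
`n C(n-1, k)`. Hence the terms with `i ≤ ⌊(n-1)/2⌋` (the nonnegative ones) sum to
`n C(n-1, ⌊(n-1)/2⌋)`, and since the full sum vanishes, the remaining ones sum to its negative.
-/

open Finset

lemma max_mul_add_min_mul {K : Type*} [Field K] [LinearOrder K] [IsStrictOrderedRing K]
    (a b p : K) :
    max a b * p + min a b * (1 - p) = (a + b) / 2 + (p - 1 / 2) * |a - b| := by
  rcases le_total a b with h | h
  · rw [max_eq_right h, min_eq_left h, abs_of_nonpos (sub_nonpos.2 h)]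
    ring
  · rw [max_eq_left h, min_eq_right h, abs_of_nonneg (sub_nonneg.2 h)]
    ring

namespace Nat

lemma choose_succ_succ_mul_sub_two_mul (m i : ℕ) :
    ((m + 1).choose (i + 1) : ℤ) * (m + 1 - 2 * (i + 1)) =
      (m + 1) * (m.choose (i + 1) - m.choose i) := by
  have hpascal := congrArg (Nat.cast : ℕ → ℤ) (choose_succ_succ' m i)
  have habsorb := congrArg (Nat.cast : ℕ → ℤ) (add_one_mul_choose_eq m i)
  push_cast at hpascal habsorb
  linear_combination (m + 1 : ℤ) * hpascal + 2 * habsorb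

lemma sum_range_choose_mul_sub_two_mul (m k : ℕ) :
    ∑ i ∈ range (k + 1), ((m + 1).choose i : ℤ) * (m + 1 - 2 * i) = (m + 1) * m.choose k := by
  induction k with
  | zero => simp
  | succ k ih =>
    rw [sum_range_succ, ih]
    push_cast
    linear_combination choose_succ_succ_mul_sub_two_mul m k

lemma sum_range_choose_mul_abs_sub_two_mul (m : ℕ) :
    ∑ i ∈ range (m + 2), ((m + 1).choose i : ℤ) * |(m + 1 : ℤ) - 2 * i| =
      2 * (m + 1) * m.choose (m / 2) := by
  set x : ℕ → ℤ := fun i ↦ ((m + 1).choose i : ℤ) * (m + 1 - 2 * i)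
  have hk : m / 2 + 1 ≤ m + 2 := by omega
  have hlow : ∀ i ∈ range (m / 2 + 1), ((m + 1).choose i : ℤ) * |(m + 1 : ℤ) - 2 * i| = x i := by
    intro i hi
    rw [abs_of_nonneg (by rw [mem_range] at hi; omega)]
  have hhigh : ∀ i ∈ Ico (m / 2 + 1) (m + 2),
      ((m + 1).choose i : ℤ) * |(m + 1 : ℤ) - 2 * i| = -x i := by
    intro i hi
    rw [abs_of_nonpos (by rw [mem_Ico] at hi; omega)]
    ring
  have htotal : ∑ i ∈ range (m + 2), x i = 0 := by
    simp [x, sum_range_choose_mul_sub_two_mul m (m + 1)]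
  rw [← sum_range_add_sum_Ico _ hk, sum_congr rfl hlow, sum_congr rfl hhigh, sum_neg_distrib]
  rw [← sum_range_add_sum_Ico _ hk] at htotal
  have hhalf := sum_range_choose_mul_sub_two_mul m (m / 2)
  linear_combination 2 * hhalf - htotal

end Nat

theorem stmt1_general (n : ℕ) (hn : 1 ≤ n) (p : ℝ) :
    (1 / 2 ^ n) * ∑ i ∈ Finset.range (n + 1),
        (n.choose i : ℝ) *
          ((max i (n - i) : ℕ) * p + (min i (n - i) : ℕ) * (1 - p)) / n
      = 1 / 2 + (1 / 2 ^ n) * (2 * p - 1) * ((n - 1).choose ((n - 1) / 2)) := by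
  obtain ⟨m, rfl⟩ : ∃ m, n = m + 1 := ⟨n - 1, by omega⟩
  have hterm : ∀ i ∈ range (m + 2),
      ((m + 1).choose i : ℝ) * ((max i (m + 1 - i) : ℕ) * p + (min i (m + 1 - i) : ℕ) * (1 - p))
          / (m + 1 : ℕ)
        = ((m + 1).choose i : ℝ) / 2
          + (p - 1 / 2) / (m + 1) * (((m + 1).choose i : ℝ) * |(m + 1 : ℝ) - 2 * i|) := by
    intro i hi
    rw [Nat.cast_max, Nat.cast_min, Nat.cast_sub (by rw [mem_range] at hi; omega), max_mul_add_min_mul,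
      abs_sub_comm]
    push_cast
    field_simp
    ring_nf
  have hchoose : ∑ i ∈ range (m + 2), ((m + 1).choose i : ℝ) = 2 ^ (m + 1) := by
    exact_mod_cast Nat.sum_range_choose (m + 1)
  have hdev : ∑ i ∈ range (m + 2), ((m + 1).choose i : ℝ) * |(m + 1 : ℝ) - 2 * i| =
      2 * (m + 1) * m.choose (m / 2) := by
    exact_mod_cast Nat.sum_range_choose_mul_abs_sub_two_mul m
  rw [sum_congr rfl hterm, sum_add_distrib, ← sum_div, ← mul_sum, hchoose, hdev,
    Nat.add_sub_cancel]
  field_simp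

/-- closed form for the posterior single-target vulnerability of
binary randomized response (truth probability p) followed by shuffling. -/
theorem stmt1 (n : ℕ) (hn : 1 ≤ n) (p : ℝ) (hp : 1 / 2 ≤ p) (hp1 : p ≤ 1) :
    (1 / 2 ^ n) * ∑ i ∈ Finset.range (n + 1),
        (n.choose i : ℝ) *
          ((max i (n - i) : ℕ) * p + (min i (n - i) : ℕ) * (1 - p)) / n
      = 1 / 2 + (1 / 2 ^ n) * (2 * p - 1) * ((n - 1).choose ((n - 1) / 2)) :=
  stmt1_general n hn p
end

section
/- For all natural numbers n ≥ 1: (1/2^n) · Σ_{i=0}^{n} C(n,i) · max(i, n−i)/n = 1/2 + (1/2^n)·C(n−1, ⌊(n−1)/2⌋). -/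
/-!
Use `(n - i) C(n, i) = n C(n-1, i)` where `i ≤ n / 2` and `i C(n, i) = n C(n-1, i-1)` where
`i > n / 2`: the two halves of the sum become complementary partial sums of row `n - 1` of
Pascal's triangle that overlap in exactly one entry, so
`∑ C(n, i) max(i, n - i) = n (2^(n-1) + C(n-1, ⌊n/2⌋))`.
-/

open Finset

theorem Nat.sum_range_choose_add_sum_Ico_choose {m c : ℕ} (hc : c ≤ m) :
    ∑ i ∈ range (c + 1), m.choose i + ∑ i ∈ Ico c (m + 1), m.choose i
      = 2 ^ m + m.choose c := by
  rw [sum_range_succ, ← Nat.sum_range_choose m,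
    ← sum_range_add_sum_Ico _ (show c ≤ m + 1 by omega)]
  ring

theorem Nat.sum_range_choose_mul_max (m : ℕ) :
    ∑ i ∈ range (m + 1 + 1), (m + 1).choose i * max i (m + 1 - i)
      = (m + 1) * (2 ^ m + m.choose ((m + 1) / 2)) := by
  set c := (m + 1) / 2
  have hlow : ∑ i ∈ range (c + 1), (m + 1).choose i * max i (m + 1 - i)
      = (m + 1) * ∑ i ∈ range (c + 1), m.choose i := by
    rw [mul_sum]
    refine sum_congr rfl fun i hi => ?_
    rw [mem_range] at hi
    rw [max_eq_right (by omega), ← Nat.choose_mul_succ_eq, mul_comm]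
  have hhigh : ∑ i ∈ Ico (c + 1) (m + 1 + 1), (m + 1).choose i * max i (m + 1 - i)
      = (m + 1) * ∑ i ∈ Ico c (m + 1), m.choose i := by
    rw [mul_sum, ← sum_Ico_add']
    refine sum_congr rfl fun i hi => ?_
    rw [mem_Ico] at hi
    rw [max_eq_left (by omega), Nat.add_one_mul_choose_eq]
  rw [← sum_range_add_sum_Ico _ (show c + 1 ≤ m + 1 + 1 by omega), hlow, hhigh, ← mul_add,
    Nat.sum_range_choose_add_sum_Ico_choose (by omega)]

theorem Nat.choose_half_succ_eq_choose_half (m : ℕ) :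
    m.choose ((m + 1) / 2) = m.choose (m / 2) := by
  rw [← Nat.choose_symm (show (m + 1) / 2 ≤ m by omega), show m - (m + 1) / 2 = m / 2 by omega]

/-- posterior single-target vulnerability of the pure shuffler
for binary attributes under a uniform prior. -/
theorem stmt2 (n : ℕ) (hn : 1 ≤ n) :
    (1 / 2 ^ n) * ∑ i ∈ Finset.range (n + 1),
        (n.choose i : ℝ) * (max i (n - i) : ℕ) / n
      = 1 / 2 + (1 / 2 ^ n) * ((n - 1).choose ((n - 1) / 2)) := by
  obtain ⟨m, rfl⟩ := Nat.exists_eq_add_of_le' hn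
  have hsum := congrArg (Nat.cast : ℕ → ℝ) (Nat.sum_range_choose_mul_max m)
  rw [Nat.choose_half_succ_eq_choose_half] at hsum
  rw [Nat.add_sub_cancel]
  push_cast at hsum ⊢
  rw [← sum_div, hsum]
  field_simp
  ring
end

section
/- For n ≥ 1, the sum Σ_{i=0}^{n} max(C(n−1, i−1), C(n−1, i)) = 2^{n−1} + C(n−1, ⌊(n−1)/2⌋), where C(n−1, −1) = C(n−1, n) = 0. -/
/-!
Write `m = n - 1` and `t = ⌈m / 2⌉`. The binomial coefficients `C(m, i)` increase up to `i = t`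
and decrease from there on, so the `i`-th summand is `C(m, i)` for `i ≤ t` and `C(m, i - 1)`
for `i > t`. The sum therefore runs once through the whole row `C(m, 0), …, C(m, m)`, which
contributes `2 ^ m`, and visits the middle coefficient `C(m, t) = C(m, ⌊m / 2⌋)` a second time.
-/

namespace Nat

theorem choose_le_choose_succ {m k : ℕ} (h : 2 * k + 1 ≤ m) : m.choose k ≤ m.choose (k + 1) :=
  Nat.le_of_mul_le_mul_right
    (by rw [choose_succ_right_eq]; exact Nat.mul_le_mul_left _ (by omega)) k.succ_pos

theorem choose_succ_le_choose {m k : ℕ} (h : m ≤ 2 * k + 1) : m.choose (k + 1) ≤ m.choose k :=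
  Nat.le_of_mul_le_mul_right
    (by rw [choose_succ_right_eq]; exact Nat.mul_le_mul_left _ (by omega)) k.succ_pos

theorem max_choose_pred_choose_of_two_mul_le {m i : ℕ} (h : 2 * i ≤ m + 1) :
    max (m.choose (i - 1)) (m.choose i) = m.choose i := by
  rcases i with _ | k
  · simp
  · exact max_eq_right (choose_le_choose_succ (by omega))

theorem sum_range_max_choose_pred_choose (m : ℕ) :
    ∑ i ∈ Finset.range (m + 2), max (m.choose (i - 1)) (m.choose i)
      = ∑ i ∈ Finset.range (m + 1), m.choose i + m.choose ((m + 1) / 2) := by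
  set t := (m + 1) / 2
  have rising : ∑ i ∈ Finset.range (t + 1), max (m.choose (i - 1)) (m.choose i)
      = ∑ i ∈ Finset.range t, m.choose i + m.choose t := by
    rw [Finset.sum_range_succ]
    congr 1
    · exact Finset.sum_congr rfl fun i hi =>
        max_choose_pred_choose_of_two_mul_le (by simp at hi; omega)
    · exact max_choose_pred_choose_of_two_mul_le (by omega)
  have falling : ∀ j, max (m.choose (t + 1 + j - 1)) (m.choose (t + 1 + j)) = m.choose (t + j) :=
    fun j => by
      rw [show t + 1 + j = t + j + 1 by omega, Nat.add_sub_cancel]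
      exact max_eq_left (choose_succ_le_choose (by omega))
  have row : ∑ i ∈ Finset.range (m + 1), m.choose i
      = ∑ i ∈ Finset.range t, m.choose i + ∑ j ∈ Finset.range (m + 1 - t), m.choose (t + j) := by
    rw [← Finset.sum_range_add, Nat.add_sub_cancel' (by omega)]
  rw [show m + 2 = (t + 1) + (m + 1 - t) by omega, Finset.sum_range_add, rising, row]
  simp only [falling]
  ring

end Nat

/-- Truncated subtraction makes the `i = 0` summand `max (C(n-1, 0)) (C(n-1, 0))`, which agrees
with the convention `C(n-1, -1) = 0`. -/
theorem stmt3 (n : ℕ) (hn : 1 ≤ n) :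
    ∑ i ∈ Finset.range (n + 1), max ((n - 1).choose (i - 1)) ((n - 1).choose i)
      = 2 ^ (n - 1) + (n - 1).choose ((n - 1) / 2) := by
  obtain ⟨m, rfl⟩ : ∃ m, n = m + 1 := ⟨n - 1, by omega⟩
  rw [Nat.add_sub_cancel, Nat.sum_range_max_choose_pred_choose, Nat.sum_range_choose,
    Nat.choose_symm_of_eq_add (by omega : m = (m + 1) / 2 + m / 2)]
end

section
/- For n ≥ 1 and real p with 1/2 ≤ p ≤ 1: Σ_{i=0}^{n} max(p·C(n−1,i−1) + (1−p)·C(n−1,i), (1−p)·C(n−1,i−1) + p·C(n−1,i)) = 2^{n−1} + (2p−1)·C(n−1, ⌊(n−1)/2⌋), with the convention C(n−1,−1) = C(n−1,n) = 0. -/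
/-!
Each summand is `max (p a + (1-p) b) ((1-p) a + p b) = (a + b)/2 + (2p - 1)|a - b|/2` with
`a = C(m, i-1)`, `b = C(m, i)`, `m = n - 1`. Summing, the first part gives `2^m` since every binomial
coefficient is counted twice. The sequence `0, C(m,0), …, C(m,m), 0` is unimodal with peak
`C(m, ⌊m/2⌋)`, so its total variation `∑ |a - b|` is twice the peak.
-/

open Finset

lemma max_convex_comb_swap_eq {p : ℝ} (hp : 1 / 2 ≤ p) (a b : ℝ) :
    max (p * a + (1 - p) * b) ((1 - p) * a + p * b)
      = (a + b) / 2 + (2 * p - 1) * |b - a| / 2 := by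
  rcases le_total a b with hab | hab
  · rw [max_eq_right (by nlinarith), abs_of_nonneg (by linarith)]; ring
  · rw [max_eq_left (by nlinarith), abs_of_nonpos (by linarith)]; ring

lemma sum_range_abs_sub_of_unimodal (f : ℕ → ℝ) {k N : ℕ} (hkN : k ≤ N)
    (hup : ∀ i < k, f i ≤ f (i + 1)) (hdown : ∀ i ∈ Ico k N, f (i + 1) ≤ f i) :
    ∑ i ∈ range N, |f (i + 1) - f i| = 2 * f k - f 0 - f N := by
  have hrise : ∑ i ∈ range k, |f (i + 1) - f i| = f k - f 0 := by
    rw [← sum_range_sub]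
    exact sum_congr rfl fun i hi => abs_of_nonneg (sub_nonneg.2 (hup i (mem_range.1 hi)))
  have hfall : ∑ i ∈ Ico k N, |f (i + 1) - f i| = f k - f N := by
    rw [← neg_sub, ← sum_Ico_sub f hkN, ← sum_neg_distrib]
    exact sum_congr rfl fun i hi => abs_of_nonpos (sub_nonpos.2 (hdown i hi))
  rw [← sum_range_add_sum_Ico _ hkN, hrise, hfall]
  ring

/-- `shiftedChoose m i = C(m, i - 1)`, with `C(m, -1) = 0`. -/
noncomputable def shiftedChoose (m : ℕ) : ℕ → ℝ
  | 0 => 0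
  | j + 1 => m.choose j

@[simp] lemma shiftedChoose_zero (m : ℕ) : shiftedChoose m 0 = 0 := rfl

@[simp] lemma shiftedChoose_succ (m j : ℕ) : shiftedChoose m (j + 1) = m.choose j := rfl

lemma shiftedChoose_le_succ {m i : ℕ} (hi : i ≤ m / 2) :
    shiftedChoose m i ≤ shiftedChoose m (i + 1) := by
  cases i with
  | zero => simp
  | succ j => simpa using Nat.choose_le_succ_of_lt_half_left hi

lemma shiftedChoose_succ_le {m i : ℕ} (hi : m / 2 < i) :
    shiftedChoose m (i + 1) ≤ shiftedChoose m i := by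
  obtain ⟨j, rfl⟩ : ∃ j, i = j + 1 := ⟨i - 1, by omega⟩
  suffices m.choose (j + 1) * (j + 1) ≤ m.choose j * (j + 1) by
    simpa using Nat.le_of_mul_le_mul_right this j.succ_pos
  rw [Nat.choose_succ_right_eq]
  exact Nat.mul_le_mul_left _ (by omega)

lemma sum_range_shiftedChoose (m : ℕ) : ∑ i ∈ range (m + 2), shiftedChoose m i = 2 ^ m := by
  rw [sum_range_succ', shiftedChoose_zero, add_zero]
  simp only [shiftedChoose_succ]
  exact_mod_cast Nat.sum_range_choose m

lemma sum_range_shiftedChoose_succ (m : ℕ) :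
    ∑ i ∈ range (m + 2), shiftedChoose m (i + 1) = 2 ^ m := by
  rw [← sum_range_shiftedChoose, sum_range_succ, sum_range_succ' _ (m + 1)]
  simp [Nat.choose_succ_self]

lemma sum_range_abs_shiftedChoose_succ_sub (m : ℕ) :
    ∑ i ∈ range (m + 2), |shiftedChoose m (i + 1) - shiftedChoose m i|
      = 2 * (m.choose (m / 2) : ℝ) := by
  rw [sum_range_abs_sub_of_unimodal (shiftedChoose m) (k := m / 2 + 1) (by omega)
    (fun i hi => shiftedChoose_le_succ (by omega))
    (fun i hi => shiftedChoose_succ_le (by rw [mem_Ico] at hi; omega))]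
  simp [Nat.choose_succ_self]

theorem stmt5_general (n : ℕ) (hn : 1 ≤ n) (p : ℝ) (hp : 1 / 2 ≤ p) :
    let c : ℤ → ℝ := fun j => if 0 ≤ j then ((n - 1).choose j.toNat : ℝ) else 0
    ∑ i ∈ Finset.range (n + 1),
        max (p * c ((i : ℤ) - 1) + (1 - p) * c (i : ℤ))
            ((1 - p) * c ((i : ℤ) - 1) + p * c (i : ℤ))
      = 2 ^ (n - 1) + (2 * p - 1) * ((n - 1).choose ((n - 1) / 2)) := by
  intro c
  obtain ⟨m, rfl⟩ : ∃ m, n = m + 1 := ⟨n - 1, by omega⟩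
  have hc_pred (i : ℕ) : c ((i : ℤ) - 1) = shiftedChoose m i := by
    cases i <;> simp [c]
  have hc (i : ℕ) : c (i : ℤ) = shiftedChoose m (i + 1) := by simp [c]
  simp only [Nat.add_sub_cancel, hc_pred, hc, max_convex_comb_swap_eq hp]
  rw [sum_add_distrib, ← sum_div, ← sum_div, ← mul_sum, sum_add_distrib, sum_range_shiftedChoose,
    sum_range_shiftedChoose_succ, sum_range_abs_shiftedChoose_succ_sub]
  ring

/-- closed form identity underlying the posterior vulnerability of
noise-then-shuffle in the binary case, with the convention C(n−1,−1) = C(n−1,n) = 0. -/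
theorem stmt5 (n : ℕ) (hn : 1 ≤ n) (p : ℝ) (hp : 1 / 2 ≤ p) (hp1 : p ≤ 1) :
    let c : ℤ → ℝ := fun j => if 0 ≤ j then ((n - 1).choose j.toNat : ℝ) else 0
    ∑ i ∈ Finset.range (n + 1),
        max (p * c ((i : ℤ) - 1) + (1 - p) * c (i : ℤ))
            ((1 - p) * c ((i : ℤ) - 1) + p * c (i : ℤ))
      = 2 ^ (n - 1) + (2 * p - 1) * ((n - 1).choose ((n - 1) / 2)) :=
  stmt5_general n hn p hp
end

section
/- Let K = {a,b}, n ≥ 1, p ∈ [0,1], and let x ∈ K^n have n_a(x) entries equal to a. For a target histogram with n_a(y) a's and n_b(y) = n − n_a(y) b's: Σ_{w ∈ K^n, histogram of w = (n_a(y), n_b(y))} p^{m(x,w)} (1−p)^{n−m(x,w)} = Σ_{m_a = max(n_a(x)−n_b(y), 0)}^{min(n_a(x), n_a(y))} C(n_a(x), m_a) · C(n_b(x), n_b(x)−n_a(y)+m_a) · p^{2m_a + n_b(x) − n_a(y)} · (1−p)^{n − 2m_a − n_b(x) + n_a(y)}, where m(x,w) is the number of coordinates on which x and w agree. -/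
/-!
Write `X` and `W` for the sets of coordinates where `x` and `w` are `true`. The coordinates on
which `x` and `w` agree are `W ∩ X` together with the complement of `W ∪ X`, so the agreement
count depends on `w` only through `|W|` and `j = |W ∩ X|`. The `w` with `|W| = k` and
`|W ∩ X| = j` correspond to pairs of a `j`-subset of `X` and a `(k - j)`-subset of `Xᶜ`, so
grouping the sum by `j` gives the binomial formula.
-/

open Finset

section
variable {ι : Type*} [Fintype ι] [DecidableEq ι]

theorem card_filter_card_inter_eq (s : Finset ι) {j k : ℕ} (hjk : j ≤ k) :
    #{T : Finset ι | #T = k ∧ #(T ∩ s) = j} = (#s).choose j * (#sᶜ).choose (k - j) := by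
  rw [← card_powersetCard, ← card_powersetCard, ← card_product]
  refine card_nbij' (fun T => (T ∩ s, T \ s)) (fun UV => UV.1 ∪ UV.2) ?_ ?_ ?_ ?_
  · intro T hT
    simp only [coe_filter, mem_univ, true_and, Set.mem_ofPred_eq] at hT
    have := card_sdiff_add_card_inter T s
    simp only [coe_product, mem_coe, Set.mem_prod, mem_powersetCard]
    exact ⟨⟨inter_subset_right, hT.2⟩, fun _ hi => mem_compl.mpr (mem_sdiff.mp hi).2,
      by omega⟩
  · rintro ⟨U, V⟩ hUV
    simp only [coe_product, mem_coe, Set.mem_prod, mem_powersetCard] at hUV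
    obtain ⟨⟨hU, hUcard⟩, hV, hVcard⟩ := hUV
    have hdisj : Disjoint U V :=
      disjoint_of_subset_left hU (subset_compl_iff_disjoint_left.mp hV)
    have hinter : (U ∪ V) ∩ s = U := by grind [mem_compl]
    simp only [coe_filter, mem_univ, true_and, Set.mem_ofPred_eq, card_union_of_disjoint hdisj,
      hinter]
    omega
  · intro T _
    exact sup_inf_sdiff T s
  · rintro ⟨U, V⟩ hUV
    simp only [coe_product, mem_coe, Set.mem_prod, mem_powersetCard] at hUV
    obtain ⟨⟨hU, -⟩, hV, -⟩ := hUV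
    ext i <;> grind [mem_compl]

def trueSet (w : ι → Bool) : Finset ι := {i | w i = true}

def boolFunEquivFinset : (ι → Bool) ≃ Finset ι where
  toFun := trueSet
  invFun T i := decide (i ∈ T)
  left_inv w := by ext i; simp [trueSet]
  right_inv T := by ext i; simp [trueSet]

theorem card_filter_boolFun_card_inter_eq (s : Finset ι) {j k : ℕ} (hjk : j ≤ k) :
    #{w : ι → Bool | #(trueSet w) = k ∧ #(trueSet w ∩ s) = j}
      = (#s).choose j * (#sᶜ).choose (k - j) :=
  (card_equiv boolFunEquivFinset fun _ => by simp [boolFunEquivFinset]).trans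
    (card_filter_card_inter_eq s hjk)

theorem card_agree_eq (x w : ι → Bool) :
    #{i | x i = w i}
      = 2 * #(trueSet w ∩ trueSet x) + (Fintype.card ι - #(trueSet x)) - #(trueSet w) := by
  have hsplit : ({i | x i = w i} : Finset ι)
      = trueSet w ∩ trueSet x ∪ (trueSet w ∪ trueSet x)ᶜ := by
    ext i
    simp only [trueSet, mem_filter, mem_union, mem_inter, mem_compl, mem_univ, true_and]
    cases x i <;> cases w i <;> decide
  have hdisj : Disjoint (trueSet w ∩ trueSet x) (trueSet w ∪ trueSet x)ᶜ :=
    disjoint_compl_right.mono_left inter_subset_union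
  rw [hsplit, card_union_of_disjoint hdisj, card_compl]
  have := card_union_add_card_inter (trueSet w) (trueSet x)
  have := card_le_univ (trueSet w ∪ trueSet x)
  have := card_le_univ (trueSet x)
  omega

theorem card_trueSet_inter_mem_Icc (x w : ι → Bool) :
    #(trueSet w ∩ trueSet x) ∈ Icc (#(trueSet x) - (Fintype.card ι - #(trueSet w)))
      (min #(trueSet x) #(trueSet w)) := by
  have := card_union_add_card_inter (trueSet w) (trueSet x)
  have := card_le_univ (trueSet w ∪ trueSet x)
  have : #(trueSet w ∩ trueSet x) ≤ #(trueSet w) := card_le_card inter_subset_left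
  have : #(trueSet w ∩ trueSet x) ≤ #(trueSet x) := card_le_card inter_subset_right
  rw [mem_Icc, le_min_iff]
  omega

theorem sum_filter_card_trueSet_eq {M : Type*} [AddCommMonoid M] (x : ι → Bool) (k : ℕ)
    (f : ℕ → M) :
    ∑ w with #(trueSet w) = k, f #{i | x i = w i}
      = ∑ j ∈ Icc (#(trueSet x) - (Fintype.card ι - k)) (min #(trueSet x) k),
          ((#(trueSet x)).choose j * (Fintype.card ι - #(trueSet x)).choose (k - j))
            • f (2 * j + (Fintype.card ι - #(trueSet x)) - k) := by
  have hmaps : ∀ w ∈ ({w | #(trueSet w) = k} : Finset (ι → Bool)),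
      #(trueSet w ∩ trueSet x)
        ∈ Icc (#(trueSet x) - (Fintype.card ι - k)) (min #(trueSet x) k) :=
    fun w hw => (mem_filter.mp hw).2 ▸ card_trueSet_inter_mem_Icc x w
  rw [← sum_fiberwise_of_maps_to hmaps]
  refine sum_congr rfl fun j hj => ?_
  have hfiber : ∀ w ∈ ({w | #(trueSet w) = k} : Finset (ι → Bool)).filter
      (fun w => #(trueSet w ∩ trueSet x) = j),
      f #{i | x i = w i} = f (2 * j + (Fintype.card ι - #(trueSet x)) - k) := by
    intro w hw
    rw [mem_filter, mem_filter] at hw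
    rw [card_agree_eq, hw.1.2, hw.2]
  rw [sum_congr rfl hfiber, sum_const, filter_filter,
    card_filter_boolFun_card_inter_eq _ ((mem_Icc.mp hj).2.trans (min_le_right _ _)), card_compl]

end

theorem stmt7_general (n : ℕ) (p : ℝ)
    (x : Fin n → Bool) (nay : ℕ) (hnay : nay ≤ n) :
    let na : (Fin n → Bool) → ℕ := fun z => (Finset.univ.filter fun i => z i = true).card
    let nb : (Fin n → Bool) → ℕ := fun z => n - na z
    let m : (Fin n → Bool) → (Fin n → Bool) → ℕ :=
      fun u v => (Finset.univ.filter fun i => u i = v i).card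
    ∑ w ∈ Finset.univ.filter (fun w : Fin n → Bool => na w = nay),
        p ^ m x w * (1 - p) ^ (n - m x w)
      = ∑ ma ∈ Finset.Icc (na x - (n - nay)) (min (na x) nay),
          ((na x).choose ma : ℝ) * ((nb x).choose (nb x + ma - nay) : ℝ) *
            p ^ (2 * ma + nb x - nay) * (1 - p) ^ (n - (2 * ma + nb x - nay)) := by
  intro na nb m
  have key := sum_filter_card_trueSet_eq x nay fun k => p ^ k * (1 - p) ^ (n - k)
  rw [Fintype.card_fin] at key
  refine key.trans (sum_congr rfl fun j hj => ?_)
  have hx : #(trueSet x) = na x := rfl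
  have hnb : n - na x = nb x := rfl
  rw [mem_Icc, le_min_iff] at hj
  rw [nsmul_eq_mul, hx, hnb,
    Nat.choose_symm_of_eq_add (by omega : nb x = nay - j + (nb x + j - nay))]
  push_cast
  ring

/-- explicit binomial formula for the probability that binary
randomized response maps a dataset x to an output with a given histogram
(n_a(y) entries equal to a, n_b(y) = n − n_a(y) entries equal to b). -/
theorem stmt7 (n : ℕ) (hn : 1 ≤ n) (p : ℝ) (hp0 : 0 ≤ p) (hp1 : p ≤ 1)
    (x : Fin n → Bool) (nay : ℕ) (hnay : nay ≤ n) :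
    let na : (Fin n → Bool) → ℕ := fun z => (Finset.univ.filter fun i => z i = true).card
    let nb : (Fin n → Bool) → ℕ := fun z => n - na z
    let m : (Fin n → Bool) → (Fin n → Bool) → ℕ :=
      fun u v => (Finset.univ.filter fun i => u i = v i).card
    ∑ w ∈ Finset.univ.filter (fun w : Fin n → Bool => na w = nay),
        p ^ m x w * (1 - p) ^ (n - m x w)
      = ∑ ma ∈ Finset.Icc (na x - (n - nay)) (min (na x) nay),
          ((na x).choose ma : ℝ) * ((nb x).choose (nb x + ma - nay) : ℝ) *
            p ^ (2 * ma + nb x - nay) * (1 - p) ^ (n - (2 * ma + nb x - nay)) :=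
  stmt7_general n p x nay hnay
end

section
/- Let K be a finite set of size k ≥ 2, and let N and S be the k-RR noise channel and uniform shuffle channel on K^n respectively (as stochastic matrices indexed by datasets in K^n). Then for every dataset x ∈ K^n and every histogram z on K: Σ_{y : h(y)=z} (N·S)(x,y) = Σ_{y : h(y)=z} (S·N)(x,y). In other words, noise-then-shuffle and shuffle-then-noise induce the same channel from datasets to histograms. -/
/-- Histogram of a dataset: the count of each value of K in x. -/
def hist (n k : ℕ) (x : Fin n → Fin k) : Fin k → ℕ :=
  fun v => (Finset.univ.filter fun i => x i = v).card

/-- Number of datasets sharing the histogram of x. -/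
def histCount (n k : ℕ) (x : Fin n → Fin k) : ℕ :=
  (Finset.univ.filter fun y : Fin n → Fin k => hist n k y = hist n k x).card

/-- The k-RR noise channel N(x,y) = Π_i q(y_i|x_i), with q(y|x) = p if y = x
and (1−p)/(k−1) otherwise. -/
noncomputable def Nchan (n k : ℕ) (p : ℝ) (x y : Fin n → Fin k) : ℝ :=
  ∏ i, if y i = x i then p else (1 - p) / (k - 1)

/-- The uniform shuffle channel: S(x,y) = 1/#h(x) if h(y) = h(x), else 0. -/
noncomputable def Schan (n k : ℕ) (x y : Fin n → Fin k) : ℝ :=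
  if hist n k y = hist n k x then 1 / (histCount n k x : ℝ) else 0

/-!
Both channels commute with relabelling the positions of a dataset, and histograms are exactly
the orbits of that relabelling. Summing the shuffle channel over a histogram class gives the
indicator of that class, so noise-then-shuffle sends `x` to the mass `N x` puts on the class.
Shuffle-then-noise averages the same mass over datasets with the histogram of `x`, and by
equivariance of `N` this mass is constant on that set.
-/

open Finset

section

variable {n k : ℕ}

lemma hist_comp_perm (y : Fin n → Fin k) (σ : Equiv.Perm (Fin n)) :
    hist n k (y ∘ σ) = hist n k y := by
  funext v
  exact Finset.card_equiv σ (by simp)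

lemma exists_perm_comp_eq_of_hist_eq {w x : Fin n → Fin k} (h : hist n k w = hist n k x) :
    ∃ σ : Equiv.Perm (Fin n), x ∘ σ = w := by
  have hcard (v : Fin k) : Fintype.card {i // w i = v} = Fintype.card {i // x i = v} := by
    simp only [Fintype.card_subtype]
    exact congrFun h v
  let e (v : Fin k) : {i // w i = v} ≃ {i // x i = v} := Fintype.equivOfCardEq (hcard v)
  refine ⟨(Equiv.sigmaFiberEquiv w).symm.trans
    ((Equiv.sigmaCongrRight e).trans (Equiv.sigmaFiberEquiv x)), funext fun i => ?_⟩
  exact (e (w i) ⟨i, rfl⟩).2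

lemma Nchan_comp_perm (p : ℝ) (σ : Equiv.Perm (Fin n)) (x y : Fin n → Fin k) :
    Nchan n k p (x ∘ σ) (y ∘ σ) = Nchan n k p x y :=
  Equiv.prod_comp σ fun i => if y i = x i then p else (1 - p) / (k - 1)

lemma sum_filter_hist_eq_of_hist_eq (K : (Fin n → Fin k) → (Fin n → Fin k) → ℝ)
    (hK : ∀ (σ : Equiv.Perm (Fin n)) x y, K (x ∘ σ) (y ∘ σ) = K x y)
    (z : Fin k → ℕ) {w x : Fin n → Fin k} (h : hist n k w = hist n k x) :
    ∑ y ∈ univ.filter (fun y => hist n k y = z), K w y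
      = ∑ y ∈ univ.filter (fun y => hist n k y = z), K x y := by
  obtain ⟨σ, rfl⟩ := exists_perm_comp_eq_of_hist_eq h
  refine Finset.sum_nbij' (· ∘ σ.symm) (· ∘ σ) ?_ ?_ ?_ ?_ ?_
  · simp [hist_comp_perm]
  · simp [hist_comp_perm]
  · intro y _; ext; simp
  · intro y _; ext; simp
  · intro y _
    rw [← hK σ x, Function.comp_assoc, Equiv.symm_comp_self, Function.comp_id]

lemma sum_Schan_mul_of_hist_invariant (x : Fin n → Fin k) (f : (Fin n → Fin k) → ℝ)
    (hf : ∀ w, hist n k w = hist n k x → f w = f x) :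
    ∑ w, Schan n k x w * f w = f x := by
  have hpos : (histCount n k x : ℝ) ≠ 0 :=
    Nat.cast_ne_zero.mpr (Finset.card_ne_zero_of_mem (a := x) (by simp))
  simp only [Schan, ite_mul, zero_mul]
  rw [← Finset.sum_filter, Finset.sum_congr rfl fun w hw => by rw [hf w (mem_filter.mp hw).2],
    Finset.sum_const, nsmul_eq_mul]
  change (histCount n k x : ℝ) * (1 / histCount n k x * f x) = f x
  field_simp

lemma sum_filter_hist_Schan (z : Fin k → ℕ) (w : Fin n → Fin k) :
    ∑ y ∈ univ.filter (fun y => hist n k y = z), Schan n k w y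
      = if hist n k w = z then 1 else 0 := by
  rw [Finset.sum_filter]
  simpa only [mul_ite, mul_one, mul_zero] using
    sum_Schan_mul_of_hist_invariant w (fun y => if hist n k y = z then 1 else 0)
      fun y hy => by simp only [hy]

end

theorem stmt9_general (n k : ℕ) (p : ℝ)
    (x : Fin n → Fin k) (z : Fin k → ℕ) :
    ∑ y ∈ Finset.univ.filter (fun y : Fin n → Fin k => hist n k y = z),
        (∑ w : Fin n → Fin k, Nchan n k p x w * Schan n k w y)
      = ∑ y ∈ Finset.univ.filter (fun y : Fin n → Fin k => hist n k y = z),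
        (∑ w : Fin n → Fin k, Schan n k x w * Nchan n k p w y) := by
  rw [Finset.sum_comm, Finset.sum_comm (s := univ.filter _)]
  simp only [← Finset.mul_sum, sum_filter_hist_Schan, mul_ite, mul_one, mul_zero]
  rw [← Finset.sum_filter, sum_Schan_mul_of_hist_invariant x _ fun w hw =>
    sum_filter_hist_eq_of_hist_eq _ (Nchan_comp_perm p) z hw]

/-- noise-then-shuffle and shuffle-then-noise induce the same
channel from datasets to histograms. -/
theorem stmt9 (n k : ℕ) (hn : 1 ≤ n) (hk : 2 ≤ k) (p : ℝ) (hp0 : 0 ≤ p) (hp1 : p ≤ 1)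
    (x : Fin n → Fin k) (z : Fin k → ℕ) (hz : ∑ v, z v = n) :
    ∑ y ∈ Finset.univ.filter (fun y : Fin n → Fin k => hist n k y = z),
        (∑ w : Fin n → Fin k, Nchan n k p x w * Schan n k w y)
      = ∑ y ∈ Finset.univ.filter (fun y : Fin n → Fin k => hist n k y = z),
        (∑ w : Fin n → Fin k, Schan n k x w * Nchan n k p w y) :=
  stmt9_general n k p x z
end

section
/- Let K have size k ≥ 2 and p ∈ [1/k, 1]. For the product channel N(x,y) = Π_i q(y_i|x_i) on K^n with q(y|x) = p if y=x and (1−p)/(k−1) otherwise, and uniform prior π(x) = 1/k^n, the posterior single-target vulnerability Σ_{y ∈ K^n} max_{w ∈ K} Σ_{x : x₀ = w} (1/k^n)·N(x,y) equals p. -/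
open Finset

theorem Fintype.sum_filter_apply_eq_prod {ι α R : Type*} [Fintype ι] [DecidableEq ι]
    [Fintype α] [DecidableEq α] [CommSemiring R] (f : ι → α → R) (z : ι) (w : α) :
    ∑ x ∈ univ.filter (fun x : ι → α => x z = w), ∏ i, f i (x i)
      = f z w * ∏ i ∈ univ.erase z, ∑ a, f i a := by
  have hfilter : univ.filter (fun x : ι → α => x z = w)
      = Fintype.piFinset (Function.update (fun _ => (univ : Finset α)) z {w}) := by
    ext x
    simp only [mem_filter, mem_univ, true_and, Fintype.mem_piFinset]
    refine ⟨fun hx i => ?_, fun hx => by simpa using hx z⟩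
    rcases eq_or_ne i z with rfl | hi
    · simp [hx]
    · simp [hi]
  rw [hfilter, ← prod_univ_sum, ← mul_prod_erase univ _ (mem_univ z)]
  congr 1
  · simp
  · exact Finset.prod_congr rfl fun i hi => by simp [ne_of_mem_erase hi]

theorem sum_ite_krr_eq_one {k : ℕ} (hk : 2 ≤ k) (p : ℝ) (b : Fin k) :
    ∑ a : Fin k, (if b = a then p else (1 - p) / (k - 1)) = 1 := by
  have hk1 : (k : ℝ) - 1 ≠ 0 := by
    have : (2 : ℝ) ≤ k := by exact_mod_cast hk
    linarith
  rw [← add_sum_erase _ _ (mem_univ b), if_pos rfl,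
    sum_congr rfl fun a ha => if_neg (ne_of_mem_erase ha).symm, sum_const,
    card_erase_of_mem (mem_univ b), card_univ, Fintype.card_fin, nsmul_eq_mul,
    Nat.cast_sub (by omega), Nat.cast_one, mul_div_cancel₀ _ hk1]
  ring

theorem krr_off_diag_le {k : ℕ} (hk : 2 ≤ k) {p : ℝ} (hp : 1 / (k : ℝ) ≤ p) :
    (1 - p) / (k - 1) ≤ p := by
  have hk2 : (2 : ℝ) ≤ k := by exact_mod_cast hk
  rw [div_le_iff₀ (by linarith)]
  rw [div_le_iff₀ (by linarith)] at hp
  linarith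

theorem Finset.sup'_ite_eq_of_le {α β : Type*} [DecidableEq α] [SemilatticeSup β]
    {s : Finset α} {b : α} (hb : b ∈ s) {p c : β} (hcp : c ≤ p) :
    s.sup' ⟨b, hb⟩ (fun a => if b = a then p else c) = p :=
  le_antisymm (sup'_le _ _ fun a _ => by split_ifs <;> simp [hcp])
    (le_sup'_of_le _ hb (by simp))

theorem sum_filter_Nchan {n k : ℕ} (hk : 2 ≤ k) (p : ℝ) (y : Fin n → Fin k) (z : Fin n)
    (w : Fin k) :
    ∑ x ∈ univ.filter (fun x : Fin n → Fin k => x z = w), Nchan n k p x y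
      = if y z = w then p else (1 - p) / (k - 1) := by
  unfold Nchan
  rw [Fintype.sum_filter_apply_eq_prod (fun i a => if y i = a then p else (1 - p) / (k - 1))]
  simp [sum_ite_krr_eq_one hk]

theorem sup'_sum_filter_mul_Nchan {n k : ℕ} (hk : 2 ≤ k) {p : ℝ} (hp : 1 / (k : ℝ) ≤ p)
    (z : Fin n) (H : (univ : Finset (Fin k)).Nonempty) (y : Fin n → Fin k) :
    univ.sup' H (fun w : Fin k =>
      ∑ x ∈ univ.filter (fun x : Fin n → Fin k => x z = w), 1 / (k : ℝ) ^ n * Nchan n k p x y)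
      = 1 / (k : ℝ) ^ n * p := by
  rw [sup'_congr H rfl fun w _ => by rw [← mul_sum, sum_filter_Nchan hk],
    ← mul₀_sup' (by positivity), sup'_ite_eq_of_le (mem_univ _) (krr_off_diag_le hk hp)]

/-- the posterior single-target vulnerability of the k-RR channel
under the uniform prior equals p, for p ≥ 1/k. -/
theorem stmt11 (n k : ℕ) (hn : 1 ≤ n) (hk : 2 ≤ k) (p : ℝ)
    (hp : 1 / (k : ℝ) ≤ p) :
    ∑ y : Fin n → Fin k,
      Finset.univ.sup' ⟨⟨0, by omega⟩, Finset.mem_univ _⟩ (fun w : Fin k =>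
        ∑ x ∈ Finset.univ.filter (fun x : Fin n → Fin k => x ⟨0, by omega⟩ = w),
          (1 / (k : ℝ) ^ n) * Nchan n k p x y)
      = p := by
  calc _ = ∑ _y : Fin n → Fin k, 1 / (k : ℝ) ^ n * p :=
        sum_congr rfl fun y _ => sup'_sum_filter_mul_Nchan hk hp _ _ y
    _ = p := by
      rw [sum_const, card_univ, Fintype.card_fun, Fintype.card_fin, Fintype.card_fin,
        nsmul_eq_mul]
      push_cast
      field_simp
end

section
/- For n ≥ 1 and 1/2 ≤ p ≤ 1, the closed-form binary noise-then-shuffle posterior vulnerability 1/2 + (1/2^n)(2p−1)·C(n−1, ⌊(n−1)/2⌋) is monotonically nonincreasing in n for fixed p, and it converges to 1/2 as n → ∞ for every such p (since C(n−1, ⌊(n−1)/2⌋)/2^n → 0). -/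
/-- Induction bound on the central binomial coefficient. -/
lemma lemA : ∀ k : ℕ, (2 * k + 1) * (Nat.centralBinom k) ^ 2 ≤ 16 ^ k := by
  intro k
  induction k with
  | zero => simp [Nat.centralBinom]
  | succ k ih =>
    have h := Nat.succ_mul_centralBinom_succ k
    have key : (k + 1) ^ 2 * ((2 * (k + 1) + 1) * (Nat.centralBinom (k + 1)) ^ 2)
        ≤ (k + 1) ^ 2 * 16 ^ (k + 1) := by
      have h2 : ((k + 1) * Nat.centralBinom (k + 1)) ^ 2
          = (2 * (2 * k + 1) * Nat.centralBinom k) ^ 2 := by rw [h]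
      have h3 : 16 ^ (k + 1) = 16 * 16 ^ k := by ring
      nlinarith [ih, sq_nonneg (Nat.centralBinom k), Nat.zero_le ((Nat.centralBinom k) ^ 2)]
    exact Nat.le_of_mul_le_mul_left key (by positivity)

/-- Middle binomial coefficient squared bound. -/
lemma lemB (m : ℕ) : (m + 1) * (m.choose (m / 2)) ^ 2 ≤ 2 * 4 ^ m := by
  rcases Nat.even_or_odd m with ⟨k, hk⟩ | ⟨k, hk⟩
  · subst hk
    have h1 : k + k = 2 * k := by ring
    rw [h1]
    have h2 : (2 * k) / 2 = k := by omega
    rw [h2]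
    have := lemA k
    have h4 : (16 : ℕ) ^ k = 4 ^ (2 * k) := by rw [pow_mul]; norm_num
    have : (2 * k + 1) * ((2 * k).choose k) ^ 2 ≤ 4 ^ (2 * k) := by
      rw [← h4]; exact this
    nlinarith [Nat.zero_le (((2 * k).choose k) ^ 2)]
  · subst hk
    have h2 : (2 * k + 1) / 2 = k := by omega
    rw [h2]
    have hch : (2 * k + 1).choose k ≤ 2 * Nat.centralBinom k := by
      have hs : (2 * k + 1).choose k = (2 * k + 1).choose (k + 1) := by
        rw [← Nat.choose_symm (by omega)]
        congr 1
        omega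
      rw [hs, Nat.choose_succ_succ]
      have h5 : (2 * k).choose (k + 1) ≤ (2 * k).choose ((2 * k) / 2) :=
        Nat.choose_le_middle _ _
      have h6 : (2 * k) / 2 = k := by omega
      rw [h6] at h5
      unfold Nat.centralBinom
      simp only [Nat.succ_eq_add_one] at *
      omega
    have hA := lemA k
    have h4 : (4 : ℕ) ^ (2 * k + 1) = 4 * 16 ^ k := by
      rw [pow_succ, pow_mul]; norm_num; ring
    calc (2 * k + 1 + 1) * ((2 * k + 1).choose k) ^ 2
        ≤ (2 * k + 1 + 1) * (2 * Nat.centralBinom k) ^ 2 := by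
          gcongr
      _ = 4 * ((2 * k + 2) * (Nat.centralBinom k) ^ 2) := by ring
      _ ≤ 4 * (2 * ((2 * k + 1) * (Nat.centralBinom k) ^ 2)) := by
          nlinarith [Nat.zero_le ((Nat.centralBinom k) ^ 2)]
      _ ≤ 4 * (2 * 16 ^ k) := by gcongr
      _ = 2 * 4 ^ (2 * k + 1) := by rw [h4]; ring
  
/-- One-step growth: a middle binomial at level m+1 is at most twice the one at level m. -/
lemma lemC (m s : ℕ) : (m + 1).choose s ≤ 2 * m.choose (m / 2) := by
  have hmid : 1 ≤ m.choose (m / 2) :=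
    Nat.choose_pos (Nat.div_le_self m 2)
  cases s with
  | zero => simpa using by omega
  | succ t =>
    rw [Nat.choose_succ_succ]
    have h1 := Nat.choose_le_middle t m
    have h2 := Nat.choose_le_middle (t + 1) m
    simp only [Nat.succ_eq_add_one] at *
    omega

/-- the closed-form binary noise-then-shuffle posterior
vulnerability F(n) = 1/2 + (1/2^n)(2p−1)·C(n−1, ⌊(n−1)/2⌋) is monotonically
nonincreasing in n (for fixed p ∈ [1/2,1]) and converges to 1/2, since
(1/2^n)·C(n−1, ⌊(n−1)/2⌋) → 0. -/
theorem stmt16 (p : ℝ) (hp : 1 / 2 ≤ p) (hp1 : p ≤ 1) :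
    let F : ℕ → ℝ := fun n =>
      1 / 2 + (1 / 2 ^ n) * (2 * p - 1) * (((n - 1).choose ((n - 1) / 2) : ℕ) : ℝ)
    (∀ n : ℕ, 1 ≤ n → F (n + 1) ≤ F n) ∧
    Filter.Tendsto
      (fun n : ℕ => (1 / 2 ^ n : ℝ) * (((n - 1).choose ((n - 1) / 2) : ℕ) : ℝ))
      Filter.atTop (nhds 0) ∧
    Filter.Tendsto F Filter.atTop (nhds (1 / 2)) := by
  intro F
  have hp0 : (0 : ℝ) ≤ 2 * p - 1 := by linarith
  -- the coefficient sequence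
  set g : ℕ → ℝ := fun n => (1 / 2 ^ n : ℝ) * (((n - 1).choose ((n - 1) / 2) : ℕ) : ℝ) with hg
  have hgnonneg : ∀ n, 0 ≤ g n := by
    intro n; positivity
  -- monotonicity of g (for n ≥ 1)
  have hgmono : ∀ n : ℕ, 1 ≤ n → g (n + 1) ≤ g n := by
    intro n hn
    obtain ⟨m, rfl⟩ : ∃ m, n = m + 1 := ⟨n - 1, by omega⟩
    have h1 : (m + 1 + 1 - 1 : ℕ) = m + 1 := by omega
    have h2 : (m + 1 - 1 : ℕ) = m := by omega
    simp only [hg, h1, h2]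
    have hC := lemC m ((m + 1) / 2)
    have hCr : ((m + 1).choose ((m + 1) / 2) : ℝ) ≤ 2 * (m.choose (m / 2) : ℝ) := by
      exact_mod_cast hC
    have hpow : (0 : ℝ) < 2 ^ (m + 1) := by positivity
    rw [div_mul_eq_mul_div, div_mul_eq_mul_div, div_le_div_iff₀ (by positivity) (by positivity)]
    have : (2 : ℝ) ^ (m + 1 + 1) = 2 ^ (m + 1) * 2 := by ring
    calc (1 : ℝ) * ((m + 1).choose ((m + 1) / 2) : ℝ) * 2 ^ (m + 1)
        ≤ 2 * (m.choose (m / 2) : ℝ) * 2 ^ (m + 1) := by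
          apply mul_le_mul_of_nonneg_right _ (by positivity)
          simpa using hCr
      _ = 1 * (m.choose (m / 2) : ℝ) * 2 ^ (m + 1 + 1) := by ring
  -- g tends to 0
  have hgto : Filter.Tendsto g Filter.atTop (nhds 0) := by
    have hbound : ∀ n : ℕ, 1 ≤ n → g n ≤ Real.sqrt (1 / n) := by
      intro n hn
      apply Real.le_sqrt_of_sq_le
      have hB := lemB (n - 1)
      have hB' : ((n - 1 + 1 : ℕ) : ℝ) * ((n - 1).choose ((n - 1) / 2) : ℝ) ^ 2
          ≤ 2 * 4 ^ (n - 1 : ℕ) := by exact_mod_cast hB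
      have hn1 : (n - 1 + 1 : ℕ) = n := by omega
      rw [hn1] at hB'
      have h4 : (4 : ℝ) ^ (n - 1 : ℕ) * 4 = (2 : ℝ) ^ n * 2 ^ n := by
        have : (4 : ℝ) ^ (n - 1 : ℕ) * 4 = 4 ^ (n - 1 + 1 : ℕ) := by rw [pow_succ]
        rw [this, hn1]
        rw [show (4 : ℝ) = 2 * 2 by norm_num, mul_pow]
      have hnpos : (0 : ℝ) < n := by exact_mod_cast hn
      rw [hg]
      simp only
      have hgsq : ((1 / 2 ^ n : ℝ) * ((n - 1).choose ((n - 1) / 2) : ℝ)) ^ 2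
          = ((n - 1).choose ((n - 1) / 2) : ℝ) ^ 2 / (2 ^ n * 2 ^ n) := by
        rw [mul_pow, div_pow, one_pow, pow_two ((2:ℝ) ^ n), one_div, inv_mul_eq_div]
      rw [hgsq, div_le_div_iff₀ (by positivity) hnpos]
      calc ((n - 1).choose ((n - 1) / 2) : ℝ) ^ 2 * n
          = ((n : ℝ) * ((n - 1).choose ((n - 1) / 2) : ℝ) ^ 2) := by ring
        _ ≤ 2 * 4 ^ (n - 1 : ℕ) := hB'
        _ ≤ 4 ^ (n - 1 : ℕ) * 4 := by nlinarith [pow_pos (show (0:ℝ) < 4 by norm_num) (n - 1)]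
        _ = 1 * (2 ^ n * 2 ^ n) := by rw [h4]; ring
    have hlim : Filter.Tendsto (fun n : ℕ => Real.sqrt (1 / n)) Filter.atTop (nhds 0) := by
      have h1 : Filter.Tendsto (fun n : ℕ => (1 / n : ℝ)) Filter.atTop (nhds 0) :=
        tendsto_one_div_atTop_nhds_zero_nat
      have h2 := (Real.continuous_sqrt.tendsto 0).comp h1
      rw [Real.sqrt_zero] at h2
      exact h2
    apply squeeze_zero' (Filter.Eventually.of_forall hgnonneg) _ hlim
    filter_upwards [Filter.eventually_ge_atTop 1] with n hn
    exact hbound n hn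
  refine ⟨?_, hgto, ?_⟩
  · intro n hn
    have := hgmono n hn
    have hF : ∀ m : ℕ, F m = 1 / 2 + (2 * p - 1) * g m := by
      intro m; simp only [F, hg]; ring
    rw [hF, hF]
    have := mul_le_mul_of_nonneg_left (hgmono n hn) hp0
    linarith
  · have hF : F = fun n => 1 / 2 + (2 * p - 1) * g n := by
      funext m; simp only [F, hg]; ring
    rw [hF]
    have := (tendsto_const_nhds (x := (2 * p - 1 : ℝ)) (f := Filter.atTop)).mul hgto
    have h2 := (tendsto_const_nhds (x := (1 / 2 : ℝ)) (f := Filter.atTop)).add this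
    simpa using h2
end

section
/- Let K = {a,b}, and for n ≥ 1 let S^r be the reduced shuffle channel from K^n to histograms, S^r(x, (i, n−i)) = 1 if x has exactly i entries equal to a, else 0. Under the uniform prior on K^n, the posterior single-target vulnerability of S^r equals that of the full shuffle channel S (uniform random permutation), and both equal (1/2^n) Σ_{i=0}^{n} C(n,i)·max(i, n−i)/n. -/
/-- Number of entries of a binary dataset equal to `true` (the value a). -/
def cntA (n : ℕ) (x : Fin n → Bool) : ℕ :=
  (Finset.univ.filter fun i => x i = true).card

/-- The full binary shuffle channel: S(x,y) = 1/#h(x) if y has the same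
histogram as x, else 0. -/
noncomputable def SfullBin (n : ℕ) (x y : Fin n → Bool) : ℝ :=
  if cntA n y = cntA n x then
    1 / ((Finset.univ.filter fun z : Fin n → Bool => cntA n z = cntA n x).card : ℝ)
  else 0

/-- The reduced binary shuffle channel from datasets to histograms (indexed by
the number i of a's): S^r(x,i) = 1 if x has exactly i a's, else 0. -/
noncomputable def SrBin (n : ℕ) (x : Fin n → Bool) (i : ℕ) : ℝ :=
  if cntA n x = i then 1 else 0

/-!
Each column of the full shuffle channel is a nonnegative multiple of the column of the reduced
channel at the same histogram, and these multiples sum to one over each histogram class, so merging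
them leaves the posterior vulnerability unchanged. In the reduced channel the column at histogram
`i` is the indicator of the datasets with `i` entries `true`; of these, `C(n-1, i-1) = i C(n,i)/n`
have first entry `true` and `C(n-1, i) = (n-i) C(n,i)/n` have first entry `false`, so the best
guess of the first entry gains `C(n,i) max(i, n-i)/n`.
-/

open Finset

theorem Finset.sup'_univ_bool {α : Type*} [SemilatticeSup α] (f : Bool → α) :
    univ.sup' univ_nonempty f = f false ⊔ f true := by
  simp [Fintype.univ_bool, sup'_insert, sup_comm]

section PosteriorVulnerability

variable {X Y Z W : Type*} [Fintype X] [Fintype W] [Nonempty W] [DecidableEq W]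

noncomputable def posteriorVulnerability (π : X → ℝ) (target : X → W) (C : X → Y → ℝ)
    (ys : Finset Y) : ℝ :=
  ∑ y ∈ ys, univ.sup' univ_nonempty fun w =>
    ∑ x ∈ univ.filter (fun x => target x = w), π x * C x y

theorem posteriorVulnerability_merge_columns [DecidableEq Z] (π : X → ℝ) (target : X → W)
    (R : X → Z → ℝ) (a : Y → ℝ) (h : Y → Z) (ys : Finset Y) (zs : Finset Z)
    (ha : ∀ y ∈ ys, 0 ≤ a y) (hmaps : ∀ y ∈ ys, h y ∈ zs)
    (hfiber : ∀ z ∈ zs, ∑ y ∈ ys with h y = z, a y = 1) :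
    posteriorVulnerability π target (fun x y => a y * R x (h y)) ys
      = posteriorVulnerability π target R zs := by
  unfold posteriorVulnerability
  rw [← sum_fiberwise_of_maps_to hmaps]
  refine sum_congr rfl fun z hz => ?_
  calc ∑ y ∈ ys with h y = z, univ.sup' univ_nonempty
          (fun w => ∑ x ∈ univ.filter (fun x => target x = w), π x * (a y * R x (h y)))
      = ∑ y ∈ ys with h y = z, a y * univ.sup' univ_nonempty
          (fun w => ∑ x ∈ univ.filter (fun x => target x = w), π x * R x z) := by
        refine sum_congr rfl fun y hy => ?_
        obtain ⟨hys, rfl⟩ := mem_filter.1 hy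
        rw [mul₀_sup' (ha y hys)]
        simp only [mul_sum, mul_left_comm]
    _ = univ.sup' univ_nonempty
          (fun w => ∑ x ∈ univ.filter (fun x => target x = w), π x * R x z) := by
        rw [← sum_mul, hfiber z hz, one_mul]

theorem posteriorVulnerability_uniform_deterministic [DecidableEq Z] (u : ℝ) (hu : 0 ≤ u)
    (target : X → W) (g : X → Z) (zs : Finset Z) :
    posteriorVulnerability (fun _ => u) target (fun x z => if g x = z then 1 else 0) zs
      = ∑ z ∈ zs, u * univ.sup' univ_nonempty
          fun w => (#{x | target x = w ∧ g x = z} : ℝ) := by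
  unfold posteriorVulnerability
  refine sum_congr rfl fun z _ => ?_
  rw [mul₀_sup' hu]
  simp only [← mul_sum, sum_boole, filter_filter]

end PosteriorVulnerability

theorem cntA_le (n : ℕ) (x : Fin n → Bool) : cntA n x ≤ n :=
  (card_filter_le _ _).trans_eq (card_fin n)

theorem cntA_cons (m : ℕ) (b : Bool) (v : Fin m → Bool) :
    cntA (m + 1) (Fin.cons b v) = b.toNat + cntA m v := by
  simp only [cntA, card_filter, Fin.sum_univ_succ, Fin.cons_zero, Fin.cons_succ]
  cases b <;> simp

theorem card_cntA_eq (n j : ℕ) : #{x : Fin n → Bool | cntA n x = j} = n.choose j := by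
  rw [show n.choose j = #(powersetCard j (univ : Finset (Fin n))) by simp]
  refine card_nbij' (fun x => ({i | x i = true} : Finset (Fin n))) (fun s i => decide (i ∈ s))
    ?_ ?_ ?_ ?_
  · intro x hx
    simp only [mem_coe, mem_filter, mem_univ, true_and, mem_powersetCard, subset_univ] at hx ⊢
    exact hx
  · intro s hs
    simp only [mem_coe, mem_filter, mem_univ, true_and, mem_powersetCard, subset_univ] at hs ⊢
    simpa [cntA] using hs
  · intro x _
    ext i
    simp
  · intro s _
    ext i
    simp

theorem card_head_cntA_eq (m : ℕ) (w : Bool) (i : ℕ) :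
    #{x : Fin (m + 1) → Bool | x 0 = w ∧ cntA (m + 1) x = i}
      = #{v : Fin m → Bool | w.toNat + cntA m v = i} := by
  refine card_nbij' Fin.tail (fun v => Fin.cons w v) ?_ ?_ ?_ ?_
  · intro x hx
    simp only [mem_coe, mem_filter, mem_univ, true_and] at hx ⊢
    rw [← hx.1, ← cntA_cons, Fin.cons_self_tail, hx.2]
  · intro v hv
    simp only [mem_coe, mem_filter, mem_univ, true_and] at hv ⊢
    exact ⟨Fin.cons_zero _ _, by rw [cntA_cons, hv]⟩
  · intro x hx
    simp only [mem_coe, mem_filter, mem_univ, true_and] at hx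
    rw [← hx.1]
    exact Fin.cons_self_tail x
  · intro v _
    exact Fin.tail_cons _ _

theorem succ_mul_card_head_false (m i : ℕ) :
    (m + 1) * #{x : Fin (m + 1) → Bool | x 0 = false ∧ cntA (m + 1) x = i}
      = (m + 1).choose i * (m + 1 - i) := by
  simp only [card_head_cntA_eq, Bool.toNat_false, zero_add, card_cntA_eq]
  rw [mul_comm, Nat.choose_mul_succ_eq]

theorem succ_mul_card_head_true (m i : ℕ) :
    (m + 1) * #{x : Fin (m + 1) → Bool | x 0 = true ∧ cntA (m + 1) x = i}
      = (m + 1).choose i * i := by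
  rw [card_head_cntA_eq]
  cases i with
  | zero => simp
  | succ k =>
    simp only [Bool.toNat_true, add_comm 1, Nat.add_right_cancel_iff, card_cntA_eq]
    exact Nat.add_one_mul_choose_eq m k

theorem succ_mul_max_card_head (m i : ℕ) :
    (m + 1) * max #{x : Fin (m + 1) → Bool | x 0 = false ∧ cntA (m + 1) x = i}
        #{x : Fin (m + 1) → Bool | x 0 = true ∧ cntA (m + 1) x = i}
      = (m + 1).choose i * max i (m + 1 - i) := by
  rw [← max_mul_mul_left, succ_mul_card_head_false, succ_mul_card_head_true, max_mul_mul_left,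
    max_comm]

theorem posteriorVulnerability_SrBin (m : ℕ) :
    posteriorVulnerability (fun _ => 1 / (2 : ℝ) ^ (m + 1)) (fun x : Fin (m + 1) → Bool => x 0)
        (SrBin (m + 1)) (range (m + 2))
      = 1 / 2 ^ (m + 1) * ∑ i ∈ range (m + 2),
          ((m + 1).choose i : ℝ) * ((max i (m + 1 - i) : ℕ) : ℝ) / ((m + 1 : ℕ) : ℝ) := by
  rw [show SrBin (m + 1) = fun x i => if cntA (m + 1) x = i then 1 else 0 from rfl,
    posteriorVulnerability_uniform_deterministic _ (by positivity), mul_sum]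
  refine sum_congr rfl fun i _ => ?_
  rw [sup'_univ_bool]
  congr 1
  rw [eq_div_iff (by positivity), mul_comm]
  exact_mod_cast succ_mul_max_card_head m i

theorem SfullBin_eq_mul_SrBin (n : ℕ) :
    SfullBin n = fun x y => 1 / (#{z : Fin n → Bool | cntA n z = cntA n y} : ℝ)
      * SrBin n x (cntA n y) := by
  ext x y
  unfold SfullBin SrBin
  by_cases h : cntA n y = cntA n x
  · rw [if_pos h, if_pos h.symm, mul_one, h]
  · rw [if_neg h, if_neg (Ne.symm h), mul_zero]

theorem sum_one_div_card_fiber_cntA {n i : ℕ} (hi : i ≤ n) :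
    ∑ y ∈ univ with cntA n y = i, 1 / (#{z : Fin n → Bool | cntA n z = cntA n y} : ℝ)
      = 1 := by
  have hpos : (0 : ℝ) < n.choose i := by exact_mod_cast Nat.choose_pos hi
  rw [sum_congr rfl fun y hy => by rw [(mem_filter.1 hy).2], sum_const, card_cntA_eq,
    nsmul_eq_mul, mul_one_div_cancel hpos.ne']

/-- under the uniform prior, the posterior single-target
vulnerability of the reduced shuffle channel S^r equals that of the full
shuffle channel S, and both equal (1/2^n) Σ_i C(n,i)·max(i, n−i)/n. -/
theorem stmt18 (n : ℕ) (hn : 1 ≤ n) :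
    (∑ i ∈ Finset.range (n + 1),
        Finset.univ.sup' Finset.univ_nonempty (fun w : Bool =>
          ∑ x ∈ Finset.univ.filter (fun x : Fin n → Bool => x ⟨0, by omega⟩ = w),
            (1 / (2 : ℝ) ^ n) * SrBin n x i))
      = (∑ y : Fin n → Bool,
          Finset.univ.sup' Finset.univ_nonempty (fun w : Bool =>
            ∑ x ∈ Finset.univ.filter (fun x : Fin n → Bool => x ⟨0, by omega⟩ = w),
              (1 / (2 : ℝ) ^ n) * SfullBin n x y)) ∧
    (∑ i ∈ Finset.range (n + 1),
        Finset.univ.sup' Finset.univ_nonempty (fun w : Bool =>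
          ∑ x ∈ Finset.univ.filter (fun x : Fin n → Bool => x ⟨0, by omega⟩ = w),
            (1 / (2 : ℝ) ^ n) * SrBin n x i))
      = (1 / 2 ^ n) * ∑ i ∈ Finset.range (n + 1),
          (n.choose i : ℝ) * ((max i (n - i) : ℕ) : ℝ) / n := by
  obtain ⟨m, rfl⟩ : ∃ m, n = m + 1 := ⟨n - 1, by omega⟩
  have hmerge : posteriorVulnerability (fun _ => 1 / (2 : ℝ) ^ (m + 1))
      (fun x : Fin (m + 1) → Bool => x 0) (SfullBin (m + 1)) univ
      = posteriorVulnerability (fun _ => 1 / (2 : ℝ) ^ (m + 1)) (fun x => x 0) (SrBin (m + 1))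
          (range (m + 2)) := by
    rw [SfullBin_eq_mul_SrBin]
    refine posteriorVulnerability_merge_columns _ _ _ _ _ _ _ (fun _ _ => by positivity)
      (fun y _ => mem_range.2 (Nat.lt_succ_of_le (cntA_le (m + 1) y))) fun i hi => ?_
    exact sum_one_div_card_fiber_cntA (Nat.lt_succ_iff.1 (mem_range.1 hi))
  exact ⟨hmerge.symm, posteriorVulnerability_SrBin m⟩
end
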